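/- If ρ is an intrinsic metric on a weighted graph G = (V,E,m,μ) such that every ball B_r(o) = {x : ρ(x,o) ≤ r} is finite, then G is complete in the sense that there exists a nondecreasing sequence of finitely supported functions η_k converging pointwise to 1 with Γ(η_k) ≤ 1/k everywhere. Concretely, the cut-off functions η_k(x) = min{max{(2k − ρ(x,o))/k, 0}, 1} have this property. -/
import Mathlib

open scoped BigOperators
open Filter

/-- The carré du champ operator. -/
noncomputable def gam {V : Type*} (m : V → ℝ) (μ : V → V → ℝ) (f g : V → ℝ) (x : V) : ℝ :=
  (1 / (2 * m x)) * ∑' y, μ x y * (f y - f x) * (g y - g x)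

lemma clamp_lip (a b : ℝ) : |min (max a 0) 1 - min (max b 0) 1| ≤ |a - b| := by
  calc |min (max a 0) 1 - min (max b 0) 1| ≤ max |max a 0 - max b 0| |(1:ℝ) - 1| :=
        abs_min_sub_min_le_max _ _ _ _
    _ ≤ |a - b| := by
        refine max_le ((abs_max_sub_max_le_abs a b 0)) (by simp [abs_nonneg])

theorem stmt3 {V : Type*} (m : V → ℝ) (μ : V → V → ℝ)
    (hm : ∀ x, 0 < m x) (hsym : ∀ x y, μ x y = μ y x)
    (hnn : ∀ x y, 0 ≤ μ x y) (hlf : ∀ x, (Function.support (μ x)).Finite)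
    (ρ : V → V → ℝ)
    (hρnn : ∀ x y, 0 ≤ ρ x y) (hρsym : ∀ x y, ρ x y = ρ y x)
    (hρdiag : ∀ x, ρ x x = 0) (hρtri : ∀ x y z, ρ x z ≤ ρ x y + ρ y z)
    (hintr : ∀ x, ∑' y, μ x y * ρ x y ^ 2 ≤ m x)
    (o : V) (hball : ∀ r : ℝ, {x | ρ x o ≤ r}.Finite)
    (η : ℕ → V → ℝ)
    (hη : ∀ (k : ℕ) (x : V), η k x = min (max ((2 * (k : ℝ) - ρ x o) / (k : ℝ)) 0) 1) :
    (∀ k, 1 ≤ k → (Function.support (η k)).Finite) ∧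
    (∀ k, 1 ≤ k → ∀ x, η k x ≤ η (k + 1) x) ∧
    (∀ x, Tendsto (fun k => η k x) atTop (nhds 1)) ∧
    (∀ k, 1 ≤ k → ∀ x, gam m μ (η k) (η k) x ≤ 1 / (k : ℝ)) := by
  refine ⟨?_, ?_, ?_, ?_⟩
  · intro k hk
    refine (hball (2 * k)).subset ?_
    intro x hx
    simp only [Function.mem_support, hη] at hx
    by_contra h
    simp only [Set.mem_setOf_eq, not_le] at h
    have hk0 : (0:ℝ) < k := by exact_mod_cast hk
    have : (2 * (k:ℝ) - ρ x o) / k ≤ 0 :=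
      div_nonpos_of_nonpos_of_nonneg (by linarith) hk0.le
    apply hx
    rw [max_eq_right this, min_eq_left zero_le_one]
  · intro k hk x
    rw [hη, hη]
    have hk0 : (0:ℝ) < k := by exact_mod_cast hk
    have hk1 : (0:ℝ) < (k:ℝ) + 1 := by linarith
    refine min_le_min (max_le_max ?_ le_rfl) le_rfl
    have h1 : (2 * (k:ℝ) - ρ x o) / k = 2 - ρ x o / k := by field_simp
    have h2 : (2 * ((k:ℝ)+1) - ρ x o) / ((k:ℝ)+1) = 2 - ρ x o / ((k:ℝ)+1) := by
      field_simp
    push_cast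
    rw [h1, h2]
    have := div_le_div_of_nonneg_left (hρnn x o) hk0 (by linarith : (k:ℝ) ≤ (k:ℝ)+1)
    have : ρ x o / ((k:ℝ)+1) ≤ ρ x o / k := by
      apply div_le_div_of_nonneg_left (hρnn x o) hk0 (by linarith)
    linarith
  · intro x
    have : ∀ᶠ k : ℕ in atTop, η k x = 1 := by
      filter_upwards [eventually_ge_atTop (⌈ρ x o⌉₊ + 1)] with k hk
      have hk0 : (0:ℝ) < k := by
        have : 1 ≤ k := le_trans (Nat.le_add_left 1 _) hk
        exact_mod_cast this
      have hρk : ρ x o ≤ (k:ℝ) := by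
        calc ρ x o ≤ ⌈ρ x o⌉₊ := Nat.le_ceil _
          _ ≤ (k:ℝ) := by exact_mod_cast le_trans (Nat.le_add_right _ 1) hk
      rw [hη]
      have h1 : (1:ℝ) ≤ (2 * (k:ℝ) - ρ x o) / k := by
        rw [le_div_iff₀ hk0]; linarith
      rw [max_eq_left (by linarith : (0:ℝ) ≤ (2 * (k:ℝ) - ρ x o) / k),
        min_eq_right h1]
    exact tendsto_const_nhds.congr' (by filter_upwards [this] with k h; exact h.symm)
  · intro k hk x
    have hk0 : (0:ℝ) < k := by exact_mod_cast hk
    unfold gam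
    have hlip : ∀ y, μ x y * (η k y - η k x) * (η k y - η k x) ≤
        (1 / (k:ℝ)^2) * (μ x y * ρ x y ^ 2) := by
      intro y
      have habs : |η k y - η k x| ≤ ρ x y / k := by
        rw [hη, hη]
        calc |min (max ((2 * (k:ℝ) - ρ y o) / k) 0) 1 -
              min (max ((2 * (k:ℝ) - ρ x o) / k) 0) 1|
            ≤ |(2 * (k:ℝ) - ρ y o) / k - (2 * (k:ℝ) - ρ x o) / k| := clamp_lip _ _
          _ = |ρ x o - ρ y o| / k := by
              rw [div_sub_div_same, abs_div, abs_of_pos hk0]; ring_nf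
          _ ≤ ρ x y / k := by
              apply div_le_div_of_nonneg_right _ hk0.le
              rw [abs_sub_le_iff]
              constructor
              · have := hρtri x y o; linarith
              · have := hρtri y x o; rw [hρsym y x] at this; linarith
      have hsq : (η k y - η k x) * (η k y - η k x) ≤ (ρ x y / k)^2 := by
        have := abs_nonneg (η k y - η k x)
        nlinarith [sq_abs (η k y - η k x)]
      have := mul_le_mul_of_nonneg_left hsq (hnn x y)
      calc μ x y * (η k y - η k x) * (η k y - η k x)
          = μ x y * ((η k y - η k x) * (η k y - η k x)) := by ring
        _ ≤ μ x y * (ρ x y / k)^2 := this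
        _ = (1 / (k:ℝ)^2) * (μ x y * ρ x y ^ 2) := by
            field_simp
    have hs1 : Summable (fun y => μ x y * (η k y - η k x) * (η k y - η k x)) := by
      apply summable_of_finite_support
      refine (hlf x).subset ?_
      intro y hy
      simp only [Function.mem_support] at hy ⊢
      intro h; apply hy; simp [h]
    have hs2 : Summable (fun y => (1 / (k:ℝ)^2) * (μ x y * ρ x y ^ 2)) := by
      apply summable_of_finite_support
      refine (hlf x).subset ?_
      intro y hy
      simp only [Function.mem_support] at hy ⊢
      intro h; apply hy; simp [h]
    have hsum : ∑' y, μ x y * (η k y - η k x) * (η k y - η k x) ≤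
        (1 / (k:ℝ)^2) * m x := by
      calc ∑' y, μ x y * (η k y - η k x) * (η k y - η k x)
          ≤ ∑' y, (1 / (k:ℝ)^2) * (μ x y * ρ x y ^ 2) := Summable.tsum_le_tsum hlip hs1 hs2
        _ = (1 / (k:ℝ)^2) * ∑' y, μ x y * ρ x y ^ 2 := tsum_mul_left
        _ ≤ (1 / (k:ℝ)^2) * m x := by
            apply mul_le_mul_of_nonneg_left (hintr x)
            positivity
    have hmx := hm x
    calc (1 / (2 * m x)) * ∑' y, μ x y * (η k y - η k x) * (η k y - η k x)
        ≤ (1 / (2 * m x)) * ((1 / (k:ℝ)^2) * m x) := by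
          apply mul_le_mul_of_nonneg_left hsum; positivity
      _ = 1 / (2 * (k:ℝ)^2) := by field_simp
      _ ≤ 1 / (k:ℝ) := by
          apply div_le_div_of_nonneg_left one_pos.le hk0
          have : (1:ℝ) ≤ (k:ℝ) := by exact_mod_cast hk
          nlinarith
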